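/- arXiv:1311.3998 — 4 statements merged into one kernel-verified Lean document; each statement's English description precedes it below -/
import Mathlib

section
/- If X is a real random variable with invertible distribution function F, density f, upper endpoint x_+ and lower endpoint x_-, then the cross-over function T(t) = (1/F(t))∫_{-∞}^t x dF + (1/(1-F(t)))∫_t^∞ x dF - 2t satisfies lim sup_{t→x_+} T(t) < 0 and lim inf_{t→x_-} T(t) > 0. -/
open MeasureTheory Set Filter

/-- The distribution function of a probability measure on ℝ. -/
noncomputable def cdfF (μ : Measure ℝ) (t : ℝ) : ℝ := (μ (Iic t)).toReal

/-- The cross-over function `T`. -/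
noncomputable def crossT (μ : Measure ℝ) (t : ℝ) : ℝ :=
  (∫ x in Iic t, x ∂μ) / cdfF μ t + (∫ x in Ioi t, x ∂μ) / (1 - cdfF μ t) - 2 * t

open Topology ProbabilityTheory

/- Since `F` is continuous, `F(x₊) = 1` and `F(x₋) = 0`, so `μ` lives on `[x₋, x₊]`.
As `t → x₊`, the lower conditional mean tends to the mean `m` while the upper conditional mean is
squeezed between `t` and `x₊`, so `T(t) → m - x₊`; symmetrically `T(t) → m - x₋` as `t → x₋`.
Finally `x₋ < m < x₊`: splitting the mean at a point `t` with `0 < F(t) < 1` bounds it by a proper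
convex combination of `t` and `x₊` (resp. of `x₋` and `t`). -/

section Order

variable {α β : Type*} [LinearOrder α] [LinearOrder β] {g : α → β} {a b t : α} {c : β}

theorem Monotone.lt_of_lt_of_isLUB_setOf_lt (hg : Monotone g) (hb : IsLUB {x | g x < c} b)
    (ht : t < b) : g t < c := by
  obtain ⟨x, hx, htx, -⟩ := hb.exists_between ht
  exact (hg htx.le).trans_lt hx

theorem Monotone.lt_of_isGLB_setOf_lt_of_lt (hg : Monotone g) (ha : IsGLB {x | c < g x} a)
    (ht : a < t) : c < g t := by
  obtain ⟨x, hx, -, hxt⟩ := ha.exists_between ht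
  exact hx.trans_le (hg hxt.le)

variable [TopologicalSpace α] [OrderTopology α] [DenselyOrdered α] [TopologicalSpace β]
  [OrderClosedTopology β]

theorem Continuous.le_of_isLUB_setOf_lt [NoMaxOrder α] (hg : Continuous g)
    (hb : IsLUB {x | g x < c} b) : c ≤ g b := by
  have hIoi : Ioi b ⊆ {x | c ≤ g x} := fun x hx => not_lt.1 fun h => (hb.1 h).not_gt hx
  exact (isClosed_le continuous_const hg).closure_subset_iff.2 hIoi
    (closure_Ioi b ▸ self_mem_Ici)

theorem Continuous.le_of_isGLB_setOf_lt [NoMinOrder α] (hg : Continuous g)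
    (ha : IsGLB {x | c < g x} a) : g a ≤ c := by
  have hIio : Iio a ⊆ {x | g x ≤ c} := fun x hx => not_lt.1 fun h => (ha.1 h).not_gt hx
  exact (isClosed_le hg continuous_const).closure_subset_iff.2 hIio
    (closure_Iio a ▸ self_mem_Iic)

end Order

section SetIntegral

variable {μ : Measure ℝ} [IsFiniteMeasure μ] {s : Set ℝ} {a b : ℝ}

theorem setIntegral_id_le (hint : Integrable (fun x : ℝ => x) μ) (hs : MeasurableSet s)
    (hb : ∀ᵐ x ∂μ, x ∈ s → x ≤ b) : ∫ x in s, x ∂μ ≤ b * μ.real s := by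
  rw [mul_comm, ← smul_eq_mul, ← setIntegral_const]
  exact setIntegral_mono_on_ae hint.integrableOn (integrableOn_const (measure_ne_top _ _)) hs hb

theorem le_setIntegral_id (hint : Integrable (fun x : ℝ => x) μ) (hs : MeasurableSet s)
    (ha : ∀ᵐ x ∂μ, x ∈ s → a ≤ x) : a * μ.real s ≤ ∫ x in s, x ∂μ := by
  rw [mul_comm, ← smul_eq_mul, ← setIntegral_const]
  exact setIntegral_mono_on_ae (integrableOn_const (measure_ne_top _ _)) hint.integrableOn hs ha

end SetIntegral

section CrossOver

variable {μ : Measure ℝ} [IsProbabilityMeasure μ] {a b t : ℝ}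

theorem cdfF_eq_cdf : cdfF μ = cdf μ := funext fun t => (cdf_eq_real μ t).symm

theorem one_sub_cdfF (t : ℝ) : 1 - cdfF μ t = μ.real (Ioi t) := by
  rw [← compl_Iic, probReal_compl_eq_one_sub measurableSet_Iic]
  rfl

theorem ae_le_of_cdfF_eq_one (h : cdfF μ b = 1) : ∀ᵐ x ∂μ, x ≤ b := by
  have : μ.real (Ioi b) = 0 := by rw [← one_sub_cdfF, h, sub_self]
  rw [ae_iff]
  simp only [not_le]
  exact (measureReal_eq_zero_iff (measure_ne_top _ _)).1 this

theorem ae_ge_of_cdfF_eq_zero (h : cdfF μ a = 0) : ∀ᵐ x ∂μ, a ≤ x := by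
  have : μ (Iic a) = 0 := (measureReal_eq_zero_iff (measure_ne_top _ _)).1 h
  rw [ae_iff]
  simp only [not_le]
  exact measure_mono_null Iio_subset_Iic_self this

theorem integral_id_lt (hint : Integrable (fun x : ℝ => x) μ) (hb : ∀ᵐ x ∂μ, x ≤ b)
    (ht : t < b) (hF : 0 < cdfF μ t) : ∫ x, x ∂μ < b :=
  calc ∫ x, x ∂μ = ∫ x in Iic t, x ∂μ + ∫ x in Ioi t, x ∂μ :=
        (intervalIntegral.integral_Iic_add_Ioi hint.integrableOn hint.integrableOn).symm
    _ ≤ t * cdfF μ t + b * (1 - cdfF μ t) := by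
        rw [one_sub_cdfF]
        exact add_le_add (setIntegral_id_le hint measurableSet_Iic (ae_of_all μ fun _ hx => hx))
          (setIntegral_id_le hint measurableSet_Ioi (hb.mono fun _ hx _ => hx))
    _ < b := by nlinarith

theorem lt_integral_id (hint : Integrable (fun x : ℝ => x) μ) (ha : ∀ᵐ x ∂μ, a ≤ x)
    (ht : a < t) (hF : cdfF μ t < 1) : a < ∫ x, x ∂μ :=
  calc a < a * cdfF μ t + t * (1 - cdfF μ t) := by nlinarith
    _ ≤ ∫ x in Iic t, x ∂μ + ∫ x in Ioi t, x ∂μ := by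
        rw [one_sub_cdfF]
        exact add_le_add (le_setIntegral_id hint measurableSet_Iic (ha.mono fun _ hx _ => hx))
          (le_setIntegral_id hint measurableSet_Ioi (ae_of_all μ fun _ hx => le_of_lt hx))
    _ = ∫ x, x ∂μ := intervalIntegral.integral_Iic_add_Ioi hint.integrableOn hint.integrableOn

theorem tendsto_crossT_nhdsLT (hint : Integrable (fun x : ℝ => x) μ) (hb : ∀ᵐ x ∂μ, x ≤ b)
    (hF : Tendsto (cdfF μ) (𝓝[<] b) (𝓝 1)) (hlt : ∀ t < b, cdfF μ t < 1) :
    Tendsto (crossT μ) (𝓝[<] b) (𝓝 (∫ x, x ∂μ - b)) := by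
  have hid : Tendsto (fun t : ℝ => t) (𝓝[<] b) (𝓝 b) :=
    tendsto_nhdsWithin_of_tendsto_nhds tendsto_id
  have htail : Tendsto (fun t => μ.real (Ioi t)) (𝓝[<] b) (𝓝 0) := by
    simpa only [one_sub_cdfF, sub_self] using tendsto_const_nhds (x := (1 : ℝ)).sub hF
  have hupper : Tendsto (fun t => ∫ x in Ioi t, x ∂μ) (𝓝[<] b) (𝓝 0) := by
    refine tendsto_of_tendsto_of_tendsto_of_le_of_le (by simpa using hid.mul htail)
      (by simpa using htail.const_mul b) (fun t => ?_) (fun t => ?_)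
    · exact le_setIntegral_id hint measurableSet_Ioi (ae_of_all μ fun x (hx : t < x) => hx.le)
    · exact setIntegral_id_le hint measurableSet_Ioi (hb.mono fun x hx _ => hx)
  have hlower : Tendsto (fun t => ∫ x in Iic t, x ∂μ) (𝓝[<] b) (𝓝 (∫ x, x ∂μ)) := by
    have hsplit (t : ℝ) : ∫ x in Iic t, x ∂μ = ∫ x, x ∂μ - ∫ x in Ioi t, x ∂μ :=
      eq_sub_of_add_eq (intervalIntegral.integral_Iic_add_Ioi hint.integrableOn hint.integrableOn)
    simpa only [hsplit, sub_zero] using tendsto_const_nhds.sub hupper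
  have hupperMean : Tendsto (fun t => (∫ x in Ioi t, x ∂μ) / (1 - cdfF μ t)) (𝓝[<] b) (𝓝 b) := by
    refine tendsto_of_tendsto_of_tendsto_of_le_of_le' hid tendsto_const_nhds ?_ ?_ <;>
      filter_upwards [self_mem_nhdsWithin] with t (ht : t < b)
    · rw [le_div_iff₀ (sub_pos.2 (hlt t ht)), one_sub_cdfF]
      exact le_setIntegral_id hint measurableSet_Ioi (ae_of_all μ fun x (hx : t < x) => hx.le)
    · rw [div_le_iff₀ (sub_pos.2 (hlt t ht)), one_sub_cdfF]
      exact setIntegral_id_le hint measurableSet_Ioi (hb.mono fun x hx _ => hx)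
  rw [show ∫ x, x ∂μ - b = (∫ x, x ∂μ) / 1 + b - 2 * b by ring]
  exact ((hlower.div hF one_ne_zero).add hupperMean).sub (hid.const_mul 2)

theorem tendsto_crossT_nhdsGT (hint : Integrable (fun x : ℝ => x) μ) (ha : ∀ᵐ x ∂μ, a ≤ x)
    (hF : Tendsto (cdfF μ) (𝓝[>] a) (𝓝 0)) (hpos : ∀ t, a < t → 0 < cdfF μ t) :
    Tendsto (crossT μ) (𝓝[>] a) (𝓝 (∫ x, x ∂μ - a)) := by
  have hid : Tendsto (fun t : ℝ => t) (𝓝[>] a) (𝓝 a) :=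
    tendsto_nhdsWithin_of_tendsto_nhds tendsto_id
  have hlower : Tendsto (fun t => ∫ x in Iic t, x ∂μ) (𝓝[>] a) (𝓝 0) := by
    refine tendsto_of_tendsto_of_tendsto_of_le_of_le (by simpa using hF.const_mul a)
      (by simpa using hid.mul hF) (fun t => ?_) (fun t => ?_)
    · exact le_setIntegral_id hint measurableSet_Iic (ha.mono fun x hx _ => hx)
    · exact setIntegral_id_le hint measurableSet_Iic (ae_of_all μ fun x (hx : x ≤ t) => hx)
  have hupper : Tendsto (fun t => ∫ x in Ioi t, x ∂μ) (𝓝[>] a) (𝓝 (∫ x, x ∂μ)) := by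
    have hsplit (t : ℝ) : ∫ x in Ioi t, x ∂μ = ∫ x, x ∂μ - ∫ x in Iic t, x ∂μ :=
      eq_sub_of_add_eq' (intervalIntegral.integral_Iic_add_Ioi hint.integrableOn hint.integrableOn)
    simpa only [hsplit, sub_zero] using tendsto_const_nhds.sub hlower
  have hlowerMean : Tendsto (fun t => (∫ x in Iic t, x ∂μ) / cdfF μ t) (𝓝[>] a) (𝓝 a) := by
    refine tendsto_of_tendsto_of_tendsto_of_le_of_le' tendsto_const_nhds hid ?_ ?_ <;>
      filter_upwards [self_mem_nhdsWithin] with t (ht : a < t)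
    · rw [le_div_iff₀ (hpos t ht)]
      exact le_setIntegral_id hint measurableSet_Iic (ha.mono fun x hx _ => hx)
    · rw [div_le_iff₀ (hpos t ht)]
      exact setIntegral_id_le hint measurableSet_Iic (ae_of_all μ fun x (hx : x ≤ t) => hx)
  have hupperMass : Tendsto (fun t => 1 - cdfF μ t) (𝓝[>] a) (𝓝 1) := by
    simpa using tendsto_const_nhds (x := (1 : ℝ)).sub hF
  rw [show ∫ x, x ∂μ - a = a + (∫ x, x ∂μ) / 1 - 2 * a by ring]
  exact (hlowerMean.add (hupper.div hupperMass one_ne_zero)).sub (hid.const_mul 2)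

end CrossOver

theorem stmt0_general (μ : Measure ℝ) [IsProbabilityMeasure μ] (f : ℝ → ℝ)
    (hdens : ∀ x, HasDerivAt (cdfF μ) (f x) x)
    (hint : Integrable (fun x : ℝ => x) μ)
    (xm xp : ℝ)
    (hxp : IsLUB {x | cdfF μ x < 1} xp)
    (hxm : IsGLB {x | 0 < cdfF μ x} xm) :
    limsup (crossT μ) (nhdsWithin xp (Iio xp)) < 0 ∧
      0 < liminf (crossT μ) (nhdsWithin xm (Ioi xm)) := by
  have hcont : Continuous (cdfF μ) := continuous_iff_continuousAt.2 fun x => (hdens x).continuousAt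
  have hmono : Monotone (cdfF μ) := cdfF_eq_cdf (μ := μ) ▸ monotone_cdf μ
  have hFxp : cdfF μ xp = 1 :=
    le_antisymm (cdfF_eq_cdf (μ := μ) ▸ cdf_le_one μ xp) (hcont.le_of_isLUB_setOf_lt hxp)
  have hFxm : cdfF μ xm = 0 :=
    le_antisymm (hcont.le_of_isGLB_setOf_lt hxm) (cdfF_eq_cdf (μ := μ) ▸ cdf_nonneg μ xm)
  have hFp : Tendsto (cdfF μ) (𝓝[<] xp) (𝓝 1) := hFxp ▸ hcont.continuousWithinAt
  have hFm : Tendsto (cdfF μ) (𝓝[>] xm) (𝓝 0) := hFxm ▸ hcont.continuousWithinAt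
  obtain ⟨tp, htp, hFtp⟩ : ∃ t < xp, 0 < cdfF μ t :=
    ((eventually_mem_nhdsWithin (a := xp) (s := Iio xp)).and
      (hFp.eventually (lt_mem_nhds one_pos))).exists
  obtain ⟨tm, htm, hFtm⟩ : ∃ t > xm, cdfF μ t < 1 :=
    ((eventually_mem_nhdsWithin (a := xm) (s := Ioi xm)).and
      (hFm.eventually (gt_mem_nhds one_pos))).exists
  constructor
  · rw [(tendsto_crossT_nhdsLT hint (ae_le_of_cdfF_eq_one hFxp) hFp
      fun t => hmono.lt_of_lt_of_isLUB_setOf_lt hxp).limsup_eq]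
    linarith [integral_id_lt hint (ae_le_of_cdfF_eq_one hFxp) htp hFtp]
  · rw [(tendsto_crossT_nhdsGT hint (ae_ge_of_cdfF_eq_zero hFxm) hFm
      fun t => hmono.lt_of_isGLB_setOf_lt_of_lt hxm).liminf_eq]
    linarith [lt_integral_id hint (ae_ge_of_cdfF_eq_zero hFxm) htm hFtm]

theorem stmt0 (μ : Measure ℝ) [IsProbabilityMeasure μ] (f : ℝ → ℝ)
    (hdens : ∀ x, HasDerivAt (cdfF μ) (f x) x)
    (hinv : StrictMonoOn (cdfF μ) {x | 0 < cdfF μ x ∧ cdfF μ x < 1})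
    (hint : Integrable (fun x : ℝ => x) μ)
    (xm xp : ℝ)
    (hxp : IsLUB {x | cdfF μ x < 1} xp)
    (hxm : IsGLB {x | 0 < cdfF μ x} xm) :
    limsup (crossT μ) (nhdsWithin xp (Iio xp)) < 0 ∧
      0 < liminf (crossT μ) (nhdsWithin xm (Ioi xm)) :=
  stmt0_general μ f hdens hint xm xp hxp hxm
end

section
/- Suppose T: (x_-, x_+) → ℝ is continuous with a unique zero t_0, satisfies lim sup_{t→x_+} T(t) < 0 and lim inf_{t→x_-} T(t) > 0, and T_n is a sequence of random functions such that sup_{t ∈ (x_-,x_+)} |T_n(t) - T(t)| → 0 in probability. Define t_n = sup{t : T_n(t) ≥ 0} (with conventions ±∞ if T_n has constant sign). Then t_n → t_0 in probability. -/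
open MeasureTheory Set Filter

theorem stmt10 {Ω : Type*} [MeasurableSpace Ω] (μ : Measure Ω) [IsProbabilityMeasure μ]
    (xm xp t₀ : ℝ) (T : ℝ → ℝ) (Tn : ℕ → Ω → ℝ → ℝ)
    (hcont : ContinuousOn T (Ioo xm xp))
    (ht₀ : t₀ ∈ Ioo xm xp) (hzero : T t₀ = 0)
    (huniq : ∀ t ∈ Ioo xm xp, T t = 0 → t = t₀)
    (hub : limsup T (nhdsWithin xp (Iio xp)) < 0)
    (hlb : 0 < liminf T (nhdsWithin xm (Ioi xm)))
    (hconv : ∀ ε > 0, Tendsto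
      (fun n => (μ {ω | ∃ t ∈ Ioo xm xp, ε < |Tn n ω t - T t|}).toReal) atTop (nhds 0)) :
    ∀ ε > 0, Tendsto
      (fun n => (μ {ω | ε < |sSup {t ∈ Ioo xm xp | 0 ≤ Tn n ω t} - t₀|}).toReal)
      atTop (nhds 0) := by
  obtain ⟨hxm, hxp⟩ := ht₀
  -- extract a bound near xp
  have hub' : ∃ m < (0:ℝ), ∀ᶠ t in nhdsWithin xp (Iio xp), T t ≤ m := by
    rw [limsup_eq] at hub
    have hne : {a | ∀ᶠ t in nhdsWithin xp (Iio xp), T t ≤ a}.Nonempty := by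
      by_contra h
      rw [not_nonempty_iff_eq_empty] at h
      rw [h, Real.sInf_empty] at hub
      exact lt_irrefl 0 hub
    obtain ⟨m, hm, hm0⟩ := exists_lt_of_csInf_lt hne hub
    exact ⟨m, hm0, hm⟩
  obtain ⟨m, hm0, hm⟩ := hub'
  -- extract a bound near xm
  have hlb' : ∃ c > (0:ℝ), ∀ᶠ t in nhdsWithin xm (Ioi xm), c ≤ T t := by
    rw [liminf_eq] at hlb
    have hne : {a | ∀ᶠ t in nhdsWithin xm (Ioi xm), a ≤ T t}.Nonempty := by
      by_contra h
      rw [not_nonempty_iff_eq_empty] at h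
      rw [h, Real.sSup_empty] at hlb
      exact lt_irrefl 0 hlb
    obtain ⟨c, hc, hc0⟩ := exists_lt_of_lt_csSup hne hlb
    exact ⟨c, hc0, hc⟩
  obtain ⟨c, hc0, hc⟩ := hlb'
  obtain ⟨l, hl, hml⟩ := mem_nhdsLT_iff_exists_Ioo_subset.mp hm
  obtain ⟨r, hr, hcr⟩ := mem_nhdsGT_iff_exists_Ioo_subset.mp hc
  have hl' : l < xp := hl
  have hr' : xm < r := hr
  -- T is positive on (xm, t₀)
  have posT : ∀ t ∈ Ioo xm t₀, 0 < T t := by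
    intro t ht
    set t' := (xm + min t r) / 2 with ht'def
    have hmin : xm < min t r := lt_min ht.1 hr'
    have ht'1 : xm < t' := by simp only [ht'def]; linarith
    have ht'2 : t' < min t r := by simp only [ht'def]; linarith
    have ht't : t' < t := lt_of_lt_of_le ht'2 (min_le_left _ _)
    have hTt' : c ≤ T t' := hcr ⟨ht'1, lt_of_lt_of_le ht'2 (min_le_right _ _)⟩
    by_contra hneg
    push_neg at hneg
    have hsub : Icc t' t ⊆ Ioo xm xp := fun x hx =>
      ⟨lt_of_lt_of_le ht'1 hx.1, lt_of_le_of_lt hx.2 (lt_trans ht.2 hxp)⟩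
    have := intermediate_value_Icc' (le_of_lt ht't) (hcont.mono hsub)
      (show (0:ℝ) ∈ Icc (T t) (T t') from ⟨hneg, by linarith⟩)
    obtain ⟨s, hs, hTs⟩ := this
    have : s = t₀ := huniq s (hsub hs) hTs
    have : s < t₀ := lt_of_le_of_lt hs.2 ht.2
    linarith
  -- T is negative on (t₀, xp)
  have negT : ∀ t ∈ Ioo t₀ xp, T t < 0 := by
    intro t ht
    set t'' := (max t l + xp) / 2 with ht''def
    have hmax : max t l < xp := max_lt ht.2 hl'
    have ht''1 : max t l < t'' := by simp only [ht''def]; linarith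
    have ht''2 : t'' < xp := by simp only [ht''def]; linarith
    have htt'' : t < t'' := lt_of_le_of_lt (le_max_left _ _) ht''1
    have hTt'' : T t'' ≤ m := hml ⟨lt_of_le_of_lt (le_max_right _ _) ht''1, ht''2⟩
    by_contra hpos
    push_neg at hpos
    have hsub : Icc t t'' ⊆ Ioo xm xp := fun x hx =>
      ⟨lt_of_lt_of_le (lt_trans hxm ht.1) hx.1, lt_of_le_of_lt hx.2 ht''2⟩
    have := intermediate_value_Icc' (le_of_lt htt'') (hcont.mono hsub)
      (show (0:ℝ) ∈ Icc (T t'') (T t) from ⟨by linarith, hpos⟩)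
    obtain ⟨s, hs, hTs⟩ := this
    have : s = t₀ := huniq s (hsub hs) hTs
    have : t₀ < s := lt_of_lt_of_le ht.1 hs.1
    linarith
  intro ε hε
  set ε' := min ε (min ((t₀ - xm)/2) ((xp - t₀)/2)) with hε'def
  have hε'pos : 0 < ε' := by
    apply lt_min hε
    apply lt_min <;> linarith
  have hε'ε : ε' ≤ ε := min_le_left _ _
  have hε'1 : ε' ≤ (t₀ - xm)/2 := le_trans (min_le_right _ _) (min_le_left _ _)
  have hε'2 : ε' ≤ (xp - t₀)/2 := le_trans (min_le_right _ _) (min_le_right _ _)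
  have h1 : xm < t₀ - ε' := by linarith
  have h2 : t₀ + ε' < xp := by linarith
  set t₁ := t₀ - ε' with ht₁def
  have ht₁mem : t₁ ∈ Ioo xm t₀ := ⟨h1, by simp only [ht₁def]; linarith⟩
  have hTt₁ : 0 < T t₁ := posT t₁ ht₁mem
  set b2 := max l (t₀ + ε') with hb2def
  have hb2 : b2 < xp := max_lt hl' h2
  have hsubc : Icc (t₀ + ε') b2 ⊆ Ioo xm xp := fun x hx =>
    ⟨lt_of_lt_of_le (by linarith) hx.1, lt_of_le_of_lt hx.2 hb2⟩
  obtain ⟨s0, hs0mem, hs0max⟩ := isCompact_Icc.exists_isMaxOn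
    ⟨t₀ + ε', le_refl _, le_max_right _ _⟩ (hcont.mono hsubc)
  have hTs0 : T s0 < 0 := negT s0 ⟨lt_of_lt_of_le (by linarith) hs0mem.1,
    lt_of_le_of_lt hs0mem.2 hb2⟩
  set δ := min (T t₁) (min (-T s0) (-m)) / 2 with hδdef
  have hδ1 : δ ≤ T t₁ / 2 := by
    simp only [hδdef]
    have := min_le_left (T t₁) (min (-T s0) (-m))
    linarith
  have hδ2 : δ ≤ -T s0 / 2 := by
    simp only [hδdef]
    have := le_trans (min_le_right (T t₁) (min (-T s0) (-m))) (min_le_left (-T s0) (-m))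
    linarith
  have hδ3 : δ ≤ -m / 2 := by
    simp only [hδdef]
    have := le_trans (min_le_right (T t₁) (min (-T s0) (-m))) (min_le_right (-T s0) (-m))
    linarith
  have hδpos : 0 < δ := by
    simp only [hδdef]
    have h1 := lt_min hTt₁ (lt_min (by linarith : (0:ℝ) < -T s0) (by linarith : (0:ℝ) < -m))
    linarith
  -- deterministic key lemma
  have key : ∀ f : ℝ → ℝ, (∀ t ∈ Ioo xm xp, |f t - T t| ≤ δ) →
      |sSup {t ∈ Ioo xm xp | 0 ≤ f t} - t₀| ≤ ε := by
    intro f hf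
    set S := {t ∈ Ioo xm xp | 0 ≤ f t} with hSdef
    have ht₁S : t₁ ∈ S := by
      have hmem : t₁ ∈ Ioo xm xp := ⟨ht₁mem.1, lt_trans ht₁mem.2 hxp⟩
      have := abs_le.mp (hf t₁ hmem)
      exact ⟨hmem, by linarith⟩
    have hSne : S.Nonempty := ⟨t₁, ht₁S⟩
    have hbdd : BddAbove S := ⟨xp, fun x hx => le_of_lt hx.1.2⟩
    have hub2 : ∀ x ∈ S, x ≤ t₀ + ε' := by
      intro x hx
      by_contra hgt
      push_neg at hgt
      have hx1 : x ∈ Ioo xm xp := hx.1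
      have habs := abs_le.mp (hf x hx1)
      have hfx : 0 ≤ f x := hx.2
      rcases le_or_gt x b2 with h | h
      · have hTx : T x ≤ T s0 := hs0max ⟨le_of_lt hgt, h⟩
        linarith
      · have hTx : T x ≤ m := hml ⟨lt_of_le_of_lt (le_max_left l (t₀ + ε')) h, hx1.2⟩
        linarith
    have hle : sSup S ≤ t₀ + ε' := csSup_le hSne hub2
    have hge : t₁ ≤ sSup S := le_csSup hbdd ht₁S
    rw [abs_le]
    constructor <;> [skip; skip] <;> simp only [ht₁def] at hge <;> linarith
  -- measure argument
  have hsub2 : ∀ n, {ω | ε < |sSup {t ∈ Ioo xm xp | 0 ≤ Tn n ω t} - t₀|} ⊆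
      {ω | ∃ t ∈ Ioo xm xp, δ < |Tn n ω t - T t|} := by
    intro n ω hω
    by_contra h
    simp only [mem_setOf_eq, not_exists, not_lt] at h
    push_neg at h
    exact absurd (key (Tn n ω) h) (not_le.mpr hω)
  refine squeeze_zero (fun n => ENNReal.toReal_nonneg) (fun n => ?_) (hconv δ hδpos)
  exact ENNReal.toReal_mono (measure_ne_top μ _) (measure_mono (hsub2 n))
end

section
/- Let T be continuously differentiable in a neighborhood of its unique zero t_0 with T'(t_0) < 0, and let T_n be random functions with √n·sup_t |T_n(t) - T(t)| = O_p(1) and t_n → t_0 in probability, where t_n = sup{t : T_n(t) ≥ 0}. Then t_n = t_0 + O_p(n^{-1/2}), i.e., the sequence √n(t_n - t_0) is bounded in probability. -/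
/-!
Near `t₀` the function `T` lies below the line `c (t₀ - t)` to the right of `t₀` and above it to
the left, for any `0 < c < -T'(t₀)`. If `sup_t |T_n - T| ≤ η`, then `T_n < 0` wherever `T < -η`
and `T_n > 0` wherever `T > η`, so the last nonnegativity point `t_n`, once it is close to `t₀`,
lies within `η / c` of `t₀`. With `η = M / √n`, the event `√n |t_n - t₀| > M / c` is therefore
contained in `{√n sup_t |T_n - T| > M} ∪ {|t_n - t₀| > r}` for a small `r > 0`, whose
probabilities are controlled by the two hypotheses.
-/

open MeasureTheory Set Filter Topology

lemma HasDerivAt.eventually_crosses_line_of_lt_neg {T : ℝ → ℝ} {T' t₀ c : ℝ}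
    (hT : HasDerivAt T T' t₀) (hzero : T t₀ = 0) (hc : c < -T') :
    ∀ᶠ t in 𝓝 t₀, (t₀ ≤ t → T t ≤ c * (t₀ - t)) ∧ (t ≤ t₀ → c * (t₀ - t) ≤ T t) := by
  filter_upwards [hT.isLittleO.bound (sub_pos.2 hc)] with t ht
  simp only [hzero, sub_zero, smul_eq_mul, Real.norm_eq_abs] at ht
  constructor <;> intro hle
  · rw [abs_of_nonneg (sub_nonneg.2 hle)] at ht
    nlinarith [le_abs_self (T t - (t - t₀) * T')]
  · rw [abs_of_nonpos (sub_nonpos.2 hle)] at ht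
    nlinarith [neg_abs_le (T t - (t - t₀) * T')]

lemma Real.sSup_eq_zero_of_not_nonempty_and_bddAbove {S : Set ℝ}
    (h : ¬(S.Nonempty ∧ BddAbove S)) :
    sSup S = 0 := by
  rcases S.eq_empty_or_nonempty with rfl | hne
  · exact Real.sSup_empty
  · exact Real.sSup_of_not_bddAbove fun hb => h ⟨hne, hb⟩

/-- `h₀` keeps the junk value `0` of `sSup` on empty or unbounded sets out of the `δ`-ball unless
`t₀ = 0`. -/
lemma abs_sSup_nonneg_sub_le_of_abs_sub_le {f T : ℝ → ℝ} {t₀ c δ η : ℝ} (hc : 0 < c)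
    (hT : ∀ t, dist t t₀ < δ →
      (t₀ ≤ t → T t ≤ c * (t₀ - t)) ∧ (t ≤ t₀ → c * (t₀ - t) ≤ T t))
    (hf : ∀ t, |f t - T t| ≤ η) (h₀ : t₀ = 0 ∨ δ ≤ |t₀|)
    (hs : dist (sSup {t | 0 ≤ f t}) t₀ < δ) :
    |sSup {t | 0 ≤ f t} - t₀| ≤ η / c := by
  set S := {t | 0 ≤ f t}
  have hη : 0 ≤ η := (abs_nonneg _).trans (hf t₀)
  rw [Real.dist_eq] at hs
  by_cases hS : S.Nonempty ∧ BddAbove S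
  swap
  · rw [Real.sSup_eq_zero_of_not_nonempty_and_bddAbove hS] at hs ⊢
    rcases h₀ with rfl | h₀
    · simpa using div_nonneg hη hc.le
    · rw [zero_sub, abs_neg] at hs; linarith
  obtain ⟨hne, hbdd⟩ := hS
  by_contra! hlt
  rcases lt_abs.1 hlt with hright | hleft
  · obtain ⟨t, htS, ht⟩ := exists_lt_of_lt_csSup hne (by linarith : t₀ + η / c < sSup S)
    have hts : t ≤ sSup S := le_csSup hbdd htS
    have hηt : η < c * (t - t₀) := (div_lt_iff₀' hc).1 (by linarith)
    have hdist : dist t t₀ < δ := by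
      rw [Real.dist_eq, abs_of_pos (by linarith [div_nonneg hη hc.le])]
      linarith [le_abs_self (sSup S - t₀)]
    have hTt := (hT t hdist).1 (by linarith [div_nonneg hη hc.le])
    have hft : 0 ≤ f t := htS
    linarith [le_abs_self (f t - T t), hf t]
  · obtain ⟨t, hts, ht⟩ := exists_between (by linarith : sSup S < t₀ - η / c)
    have htS : t ∉ S := fun htS => (le_csSup hbdd htS).not_gt hts
    have hηt : η < c * (t₀ - t) := (div_lt_iff₀' hc).1 (by linarith)
    have hdist : dist t t₀ < δ := by
      rw [Real.dist_eq, abs_of_neg (by linarith [div_nonneg hη hc.le])]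
      linarith [neg_abs_le (sSup S - t₀)]
    have hTt := (hT t hdist).2 (by linarith [div_nonneg hη hc.le])
    have hft : f t < 0 := not_le.1 htS
    linarith [neg_abs_le (f t - T t), hf t]

lemma exists_pos_le_and_eq_zero_or_le_abs {δ : ℝ} (hδ : 0 < δ) (a : ℝ) :
    ∃ r, 0 < r ∧ r ≤ δ ∧ (a = 0 ∨ r ≤ |a|) := by
  by_cases ha : a = 0
  · exact ⟨δ, hδ, le_rfl, .inl ha⟩
  · exact ⟨min δ |a|, lt_min hδ (abs_pos.2 ha), min_le_left _ _, .inr (min_le_right _ _)⟩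

lemma limsup_measureReal_lt_of_subset_union {Ω : Type*} [MeasurableSpace Ω] (μ : Measure Ω)
    [IsFiniteMeasure μ] {A B D : ℕ → Set Ω} {ε : ℝ} (hsub : ∀ᶠ n in atTop, A n ⊆ B n ∪ D n)
    (hB : limsup (fun n => μ.real (B n)) atTop < ε)
    (hD : Tendsto (fun n => μ.real (D n)) atTop (𝓝 0)) :
    limsup (fun n => μ.real (A n)) atTop < ε := by
  obtain ⟨ε', hBε', hε'⟩ := exists_between hB
  have hB' : ∀ᶠ n in atTop, μ.real (B n) < ε' :=
    eventually_lt_of_limsup_lt hBε'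
      (isBoundedUnder_of ⟨μ.real univ, fun n => measureReal_mono (subset_univ _)⟩)
  have hD' : ∀ᶠ n in atTop, μ.real (D n) < (ε - ε') / 2 :=
    hD.eventually (gt_mem_nhds (by linarith))
  have hA : ∀ᶠ n in atTop, μ.real (A n) ≤ (ε + ε') / 2 := by
    filter_upwards [hsub, hB', hD'] with n hn hBn hDn
    linarith [measureReal_mono (μ := μ) hn, measureReal_union_le (μ := μ) (B n) (D n)]
  calc limsup (fun n => μ.real (A n)) atTop ≤ (ε + ε') / 2 :=
        limsup_le_of_le (isCoboundedUnder_le_of_le atTop fun n => measureReal_nonneg) hA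
    _ < ε := by linarith

theorem stmt11_general {Ω : Type*} [MeasurableSpace Ω] (μ : Measure Ω) [IsProbabilityMeasure μ]
    (t₀ : ℝ) (T : ℝ → ℝ) (Tn : ℕ → Ω → ℝ → ℝ) (tn : ℕ → Ω → ℝ)
    (hzero : T t₀ = 0)
    (hderiv : deriv T t₀ < 0)
    (hOp : ∀ ε > 0, ∃ M : ℝ, limsup
      (fun n : ℕ => (μ {ω | ∃ t : ℝ, M < Real.sqrt n * |Tn n ω t - T t|}).toReal) atTop < ε)
    (htn : ∀ n ω, tn n ω = sSup {t : ℝ | 0 ≤ Tn n ω t})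
    (hcons : ∀ ε > 0, Tendsto
      (fun n => (μ {ω | ε < |tn n ω - t₀|}).toReal) atTop (nhds 0)) :
    ∀ ε > 0, ∃ M : ℝ, limsup
      (fun n : ℕ => (μ {ω | M < Real.sqrt n * |tn n ω - t₀|}).toReal) atTop < ε := by
  intro ε hε
  obtain ⟨c, hc, hcT⟩ := exists_between (neg_pos.2 hderiv)
  have hT := (differentiableAt_of_deriv_ne_zero hderiv.ne).hasDerivAt
  obtain ⟨δ, hδ, hcross⟩ := Metric.eventually_nhds_iff.1
    (hT.eventually_crosses_line_of_lt_neg hzero hcT)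
  obtain ⟨r, hr, hrδ, h₀⟩ := exists_pos_le_and_eq_zero_or_le_abs hδ t₀
  obtain ⟨M, hM⟩ := hOp ε hε
  refine ⟨M / c, limsup_measureReal_lt_of_subset_union μ ?_ hM (hcons (r / 2) (by positivity))⟩
  filter_upwards [eventually_gt_atTop 0] with n hn ω hω
  by_contra hω'
  simp only [mem_union, mem_ofPred_eq, not_or, not_exists, not_lt] at hω hω'
  have hsqrt : 0 < Real.sqrt n := Real.sqrt_pos.2 (Nat.cast_pos.2 hn)
  have hclose := abs_sSup_nonneg_sub_le_of_abs_sub_le hc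
    (fun t ht => hcross (ht.trans_le hrδ)) (fun t => (le_div_iff₀' hsqrt).2 (hω'.1 t)) h₀
    (by rw [← htn, Real.dist_eq]; linarith [hω'.2])
  rw [← htn, div_div, mul_comm, ← div_div, le_div_iff₀' hsqrt] at hclose
  linarith

theorem stmt11 {Ω : Type*} [MeasurableSpace Ω] (μ : Measure Ω) [IsProbabilityMeasure μ]
    (t₀ : ℝ) (T : ℝ → ℝ) (Tn : ℕ → Ω → ℝ → ℝ) (tn : ℕ → Ω → ℝ)
    (hC1 : ∃ δ > 0, ContDiffOn ℝ 1 T (Metric.ball t₀ δ))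
    (hzero : T t₀ = 0) (huniq : ∀ t, T t = 0 → t = t₀)
    (hderiv : deriv T t₀ < 0)
    (hOp : ∀ ε > 0, ∃ M : ℝ, limsup
      (fun n : ℕ => (μ {ω | ∃ t : ℝ, M < Real.sqrt n * |Tn n ω t - T t|}).toReal) atTop < ε)
    (htn : ∀ n ω, tn n ω = sSup {t : ℝ | 0 ≤ Tn n ω t})
    (hcons : ∀ ε > 0, Tendsto
      (fun n => (μ {ω | ε < |tn n ω - t₀|}).toReal) atTop (nhds 0)) :
    ∀ ε > 0, ∃ M : ℝ, limsup
      (fun n : ℕ => (μ {ω | M < Real.sqrt n * |tn n ω - t₀|}).toReal) atTop < ε :=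
  stmt11_general μ t₀ T Tn tn hzero hderiv hOp htn hcons
end

section
/- Suppose T is twice continuously differentiable at t_0 with T(t_0) = 0, and the processes U_n(t) = √n(T_n(t) - T(t)) are stochastically equicontinuous at t_0: for every ε, η > 0 there is δ > 0 with lim sup_n P(sup_{|t-t_0|<δ} |U_n(t) - U_n(t_0)| > η) < ε. Then for any C > 0, uniformly in t ∈ [t_0 - C/√n, t_0 + C/√n], T_n(t) - T_n(t_0) = T'(t_0)(t - t_0) + o_p(n^{-1/2}), i.e., √n·sup_{t ∈ I_n} |T_n(t) - T_n(t_0) - T'(t_0)(t - t_0)| → 0 in probability, where I_n = [t_0 - C/√n, t_0 + C/√n]. -/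
open MeasureTheory Set Filter

theorem stmt12 {Ω : Type*} [MeasurableSpace Ω] (μ : Measure Ω) [IsProbabilityMeasure μ]
    (t₀ : ℝ) (T : ℝ → ℝ) (Tn : ℕ → Ω → ℝ → ℝ)
    (hC2 : ∃ δ > 0, ContDiffOn ℝ 2 T (Metric.ball t₀ δ))
    (hzero : T t₀ = 0)
    (hse : ∀ ε > 0, ∀ η > 0, ∃ δ > 0, limsup
      (fun n : ℕ => (μ {ω | ∃ t : ℝ, |t - t₀| < δ ∧
        η < |Real.sqrt n * (Tn n ω t - T t) - Real.sqrt n * (Tn n ω t₀ - T t₀)|}).toReal)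
      atTop < ε) :
    ∀ C > 0, ∀ η > 0, Tendsto
      (fun n : ℕ => (μ {ω | ∃ t ∈ Icc (t₀ - C / Real.sqrt n) (t₀ + C / Real.sqrt n),
        η < Real.sqrt n * |Tn n ω t - Tn n ω t₀ - deriv T t₀ * (t - t₀)|}).toReal)
      atTop (nhds 0) := by
  obtain ⟨δ₀, hδ₀, hT⟩ := hC2
  have hd : HasDerivAt T (deriv T t₀) t₀ := by
    have h1 : DifferentiableOn ℝ T (Metric.ball t₀ δ₀) :=
      hT.differentiableOn (by norm_num)
    exact (h1.differentiableAt
      (Metric.isOpen_ball.mem_nhds (Metric.mem_ball_self hδ₀))).hasDerivAt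
  intro C hC η hη
  rw [NormedAddCommGroup.tendsto_nhds_zero]
  intro ε hε
  obtain ⟨δ, hδ, hlim⟩ := hse ε hε (η / 2) (by positivity)
  -- little-o bound with constant η/(2C)
  have hlo := (hasDerivAt_iff_isLittleO.mp hd).def (show (0:ℝ) < η / (2 * C) by positivity)
  rw [Metric.eventually_nhds_iff] at hlo
  obtain ⟨r, hr, hR⟩ := hlo
  -- eventually C / sqrt n < min r δ
  have hst : Tendsto (fun n : ℕ => Real.sqrt n) atTop atTop := by
    apply tendsto_atTop_atTop.mpr
    intro b
    refine ⟨⌈b ^ 2⌉₊, fun n hn => ?_⟩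
    have hb2 : (b ^ 2 : ℝ) ≤ n := le_trans (Nat.le_ceil _) (by exact_mod_cast hn)
    calc b ≤ |b| := le_abs_self b
      _ = Real.sqrt (b ^ 2) := (Real.sqrt_sq_eq_abs b).symm
      _ ≤ Real.sqrt n := Real.sqrt_le_sqrt hb2
  have hsqrt : Tendsto (fun n : ℕ => C / Real.sqrt n) atTop (nhds 0) :=
    Tendsto.div_atTop tendsto_const_nhds hst
  have hsmall : ∀ᶠ n : ℕ in atTop, C / Real.sqrt n < min r δ :=
    hsqrt.eventually (gt_mem_nhds (lt_min hr hδ))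
  have hbdd : IsBoundedUnder (· ≤ ·) atTop
      (fun n : ℕ => (μ {ω | ∃ t : ℝ, |t - t₀| < δ ∧
        η / 2 < |Real.sqrt n * (Tn n ω t - T t) - Real.sqrt n * (Tn n ω t₀ - T t₀)|}).toReal) :=
    ⟨1, Filter.eventually_map.mpr (Filter.Eventually.of_forall fun n => by
      exact ENNReal.toReal_le_of_le_ofReal zero_le_one (by simpa using prob_le_one))⟩
  have hev := eventually_lt_of_limsup_lt hlim hbdd
  filter_upwards [hev, hsmall, eventually_ge_atTop 1] with n hn hsm hn1
  have hs : (0:ℝ) < Real.sqrt n := Real.sqrt_pos.mpr (by exact_mod_cast hn1)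
  have hmono : μ {ω | ∃ t ∈ Icc (t₀ - C / Real.sqrt n) (t₀ + C / Real.sqrt n),
        η < Real.sqrt n * |Tn n ω t - Tn n ω t₀ - deriv T t₀ * (t - t₀)|} ≤
      μ {ω | ∃ t : ℝ, |t - t₀| < δ ∧
        η / 2 < |Real.sqrt n * (Tn n ω t - T t) - Real.sqrt n * (Tn n ω t₀ - T t₀)|} := by
    apply measure_mono
    rintro ω ⟨t, ht, hval⟩
    have htd : |t - t₀| ≤ C / Real.sqrt n := abs_le.mpr ⟨by linarith [ht.1], by linarith [ht.2]⟩
    have htr : |t - t₀| < r := lt_of_le_of_lt htd (lt_of_lt_of_le hsm (min_le_left _ _))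
    have htδ : |t - t₀| < δ := lt_of_le_of_lt htd (lt_of_lt_of_le hsm (min_le_right _ _))
    refine ⟨t, htδ, ?_⟩
    have hRb := hR (show dist t t₀ < r by rwa [Real.dist_eq])
    simp only [Real.norm_eq_abs, smul_eq_mul] at hRb
    -- hRb : |T t - T t₀ - (t - t₀) * deriv T t₀| ≤ η / (2*C) * |t - t₀|
    have hRb2 : |T t - T t₀ - deriv T t₀ * (t - t₀)| ≤ η / (2 * Real.sqrt n) := by
      have : η / (2 * C) * |t - t₀| ≤ η / (2 * C) * (C / Real.sqrt n) := by
        apply mul_le_mul_of_nonneg_left htd (by positivity)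
      calc |T t - T t₀ - deriv T t₀ * (t - t₀)|
          = |T t - T t₀ - (t - t₀) * deriv T t₀| := by ring_nf
        _ ≤ η / (2 * C) * |t - t₀| := hRb
        _ ≤ η / (2 * C) * (C / Real.sqrt n) := this
        _ = η / (2 * Real.sqrt n) := by field_simp
    have key : Real.sqrt n * |Tn n ω t - Tn n ω t₀ - deriv T t₀ * (t - t₀)| ≤
        |Real.sqrt n * (Tn n ω t - T t) - Real.sqrt n * (Tn n ω t₀ - T t₀)|
        + Real.sqrt n * |T t - T t₀ - deriv T t₀ * (t - t₀)| := by
      have h1 : Real.sqrt n * (Tn n ω t - Tn n ω t₀ - deriv T t₀ * (t - t₀)) =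
          (Real.sqrt n * (Tn n ω t - T t) - Real.sqrt n * (Tn n ω t₀ - T t₀))
          + Real.sqrt n * (T t - T t₀ - deriv T t₀ * (t - t₀)) := by ring
      calc Real.sqrt n * |Tn n ω t - Tn n ω t₀ - deriv T t₀ * (t - t₀)|
          = |Real.sqrt n * (Tn n ω t - Tn n ω t₀ - deriv T t₀ * (t - t₀))| := by
            rw [abs_mul, abs_of_nonneg hs.le]
        _ ≤ _ := by
            rw [h1]
            refine (abs_add_le _ _).trans ?_
            gcongr
            rw [abs_mul, abs_of_nonneg hs.le]
      done
    have hsR : Real.sqrt n * |T t - T t₀ - deriv T t₀ * (t - t₀)| ≤ η / 2 := by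
      calc Real.sqrt n * |T t - T t₀ - deriv T t₀ * (t - t₀)|
          ≤ Real.sqrt n * (η / (2 * Real.sqrt n)) := by
            apply mul_le_mul_of_nonneg_left hRb2 hs.le
        _ = η / 2 := by field_simp
    linarith
  have hne : μ {ω | ∃ t : ℝ, |t - t₀| < δ ∧
        η / 2 < |Real.sqrt n * (Tn n ω t - T t) - Real.sqrt n * (Tn n ω t₀ - T t₀)|} ≠ ⊤ :=
    measure_ne_top μ _
  have := ENNReal.toReal_mono hne hmono
  rw [Real.norm_eq_abs, abs_of_nonneg ENNReal.toReal_nonneg]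
  linarith
end
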